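/- arXiv:0712.2546 — 2 statements merged into one kernel-verified Lean document; each statement's English description precedes it below -/
import Mathlib

section
/- A word over {α, β} represents the identity element of the group D = ⟨α, β | α² = β² = 1⟩ if and only if it can be transformed into the empty word by a finite sequence of cancellation steps, each deleting an adjacent pair of equal letters. -/
/-- Relators for the presentation ⟨α, β | α² = β² = 1⟩, with generators indexed by `Bool`. -/
def dihedralRels : Set (FreeGroup Bool) :=
  {FreeGroup.of true ^ 2, FreeGroup.of false ^ 2}

/-- The element of D = ⟨α, β | α² = β² = 1⟩ represented by a word over {α, β}. -/
def wordElem (l : List Bool) : PresentedGroup dihedralRels :=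
  (l.map PresentedGroup.of).prod

/-- A cancellation step on arrow words over the two-letter alphabet {α, β}
(modeled as `List Bool`): delete an adjacent pair of equal letters. -/
def CancelStep (l l' : List Bool) : Prop :=
  ∃ (p s : List Bool) (x : Bool), l = p ++ [x, x] ++ s ∧ l' = p ++ s

/-! Reading a word from the right and prepending each letter, cancelling it against the current
first letter when they agree, reduces the word by cancellation steps. Prepending a letter with
cancellation is an involution on alternating words, so `D` acts on them, and the word `l` sends
the empty word to the reduction of `l`. Hence if `l` represents `1`, its reduction is empty. -/

namespace List

variable {α : Type*} [DecidableEq α]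

def cancelCons (x : α) : List α → List α
  | [] => [x]
  | y :: u => if x = y then u else x :: y :: u

theorem IsChain.cancelCons {u : List α} (hu : u.IsChain (· ≠ ·)) (x : α) :
    (u.cancelCons x).IsChain (· ≠ ·) := by
  cases u with
  | nil => exact isChain_singleton x
  | cons y v =>
    by_cases hxy : x = y
    · simpa [List.cancelCons, hxy] using hu.tail
    · simpa [List.cancelCons, hxy] using isChain_cons_cons.2 ⟨hxy, hu⟩

theorem cancelCons_cancelCons {u : List α} (hu : u.IsChain (· ≠ ·)) (x : α) :
    (u.cancelCons x).cancelCons x = u := by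
  rcases u with _ | ⟨y, _ | ⟨z, w⟩⟩
  · simp [List.cancelCons]
  · by_cases hxy : x = y <;> simp [List.cancelCons, hxy]
  · have hyz : y ≠ z := (isChain_cons_cons.1 hu).1
    by_cases hxy : x = y
    · subst hxy; simp [List.cancelCons, hyz]
    · simp [List.cancelCons, hxy]

abbrev AlternatingWord (α : Type*) := {u : List α // u.IsChain (· ≠ ·)}

def cancelConsPerm (x : α) : Equiv.Perm (AlternatingWord α) :=
  Function.Involutive.toPerm (fun u => ⟨u.1.cancelCons x, u.2.cancelCons x⟩)
    fun u => Subtype.ext (cancelCons_cancelCons u.2 x)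

def reduceWord (l : List α) : List α :=
  l.foldr cancelCons []

end List

open List

theorem CancelStep.cons {l l' : List Bool} (h : CancelStep l l') (x : Bool) :
    CancelStep (x :: l) (x :: l') := by
  obtain ⟨p, s, y, rfl, rfl⟩ := h
  exact ⟨x :: p, s, y, rfl, rfl⟩

theorem reflTransGen_cancelStep_cancelCons (x : Bool) (u : List Bool) :
    Relation.ReflTransGen CancelStep (x :: u) (u.cancelCons x) := by
  cases u with
  | nil => rfl
  | cons y v =>
    by_cases hxy : x = y
    · subst hxy
      simpa [List.cancelCons] using Relation.ReflTransGen.single ⟨[], v, x, rfl, rfl⟩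
    · rw [List.cancelCons, if_neg hxy]

theorem reflTransGen_cancelStep_reduceWord (l : List Bool) :
    Relation.ReflTransGen CancelStep l (reduceWord l) := by
  induction l with
  | nil => rfl
  | cons x l ih =>
    exact (ih.lift _ fun _ _ h => h.cons x).trans (reflTransGen_cancelStep_cancelCons x _)

theorem wordElem_append (l l' : List Bool) : wordElem (l ++ l') = wordElem l * wordElem l' := by
  simp [wordElem]

theorem wordElem_pair (x : Bool) : wordElem [x, x] = 1 := by
  have hx : FreeGroup.of x ^ 2 ∈ dihedralRels := by cases x <;> simp [dihedralRels]
  rw [wordElem, List.map_cons, List.map_singleton, List.prod_pair, ← pow_two]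
  exact (map_pow (PresentedGroup.mk dihedralRels) _ 2).symm.trans (PresentedGroup.one_of_mem hx)

theorem CancelStep.wordElem_eq {l l' : List Bool} (h : CancelStep l l') :
    wordElem l = wordElem l' := by
  obtain ⟨p, s, x, rfl, rfl⟩ := h
  simp only [wordElem_append, wordElem_pair, mul_one]

theorem Relation.ReflTransGen.wordElem_eq {l l' : List Bool}
    (h : Relation.ReflTransGen CancelStep l l') : wordElem l = wordElem l' := by
  induction h with
  | refl => rfl
  | tail _ hstep ih => exact ih.trans hstep.wordElem_eq

def alternatingWordAction : PresentedGroup dihedralRels →* Equiv.Perm (AlternatingWord Bool) :=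
  PresentedGroup.toGroup (f := cancelConsPerm) <| by
    have hsq (x : Bool) : cancelConsPerm x ^ 2 = 1 := by
      ext u : 2
      exact cancelCons_cancelCons u.2 x
    rintro r (rfl | rfl) <;> simp [hsq]

theorem alternatingWordAction_wordElem_nil (l : List Bool) :
    (alternatingWordAction (wordElem l) ⟨[], isChain_nil⟩).1 = reduceWord l := by
  induction l with
  | nil => rfl
  | cons x l ih =>
    simp only [wordElem, List.map_cons, List.prod_cons, map_mul, Equiv.Perm.mul_apply] at ih ⊢
    rw [alternatingWordAction, PresentedGroup.toGroup.of, ← alternatingWordAction]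
    exact congrArg (cancelCons x) ih

/-- A word over {α, β} represents the identity of D = ⟨α, β | α² = β² = 1⟩ iff it
can be reduced to the empty word by cancellation steps. -/
theorem wordElem_eq_one_iff_reduces_to_nil (l : List Bool) :
    wordElem l = 1 ↔ Relation.ReflTransGen CancelStep l [] := by
  refine ⟨fun h => ?_, fun h => h.wordElem_eq⟩
  have hred : reduceWord l = [] := by
    rw [← alternatingWordAction_wordElem_nil, h]
    rfl
  simpa [hred] using reflTransGen_cancelStep_reduceWord l
end

section
/- Cyclic reduction of arrow words: for every word l over {α, β} of even length there exists exactly one natural number n such that l can be transformed into the word (αβ)ⁿ (the 2n-letter alternating word αβαβ…αβ; for n = 0, the empty word) by a finite sequence of moves, each of which is either a cyclic rotation or a cancellation step deleting an adjacent pair of equal letters. -/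
/-- A cyclic move on arrow words: either a cancellation step or a cyclic rotation
(moving letters from the front of the word to the back). -/
def CyclicMove (l l' : List Bool) : Prop :=
  CancelStep l l' ∨ ∃ n : ℕ, l' = l.rotate n

/-- The word (αβ)ⁿ: the alternating word of length 2n (empty for n = 0). -/
def abPow (n : ℕ) : List Bool :=
  (List.replicate n [true, false]).flatten


/-!
Read α as `true` ↦ 1 and β as `false` ↦ 0 and take the alternating sum of a word. A cancellation
deletes a pair contributing `x - x = 0`, and on a word of even length a rotation by one letter
only flips the sign, so the absolute value of this sum is invariant under both moves; on
`(αβ)ⁿ` it equals `n`, which gives uniqueness. For existence, cancel while possible: a word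
with no two equal adjacent letters alternates, so when its length is even it is `(αβ)ⁿ` or
`(βα)ⁿ`, and the latter rotates to the former.
-/

open Relation

def altWeight (l : List Bool) : ℤ :=
  (l.map fun b => (b.toNat : ℤ)).alternatingSum

lemma altWeight_append (u v : List Bool) :
    altWeight (u ++ v) = altWeight u + (-1) ^ u.length * altWeight v := by
  simp [altWeight, List.alternatingSum_append]

lemma altWeight_cancel (p s : List Bool) (x : Bool) :
    altWeight (p ++ [x, x] ++ s) = altWeight (p ++ s) := by
  rw [List.append_assoc, altWeight_append, altWeight_append, altWeight_append]
  simp [altWeight]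

lemma altWeight_rotate_one {l : List Bool} (hl : Even l.length) :
    altWeight (l.rotate 1) = -altWeight l := by
  cases l with
  | nil => rfl
  | cons a t =>
    have ht : Odd t.length := by simpa [Nat.even_add_one] using hl
    simp [altWeight, List.alternatingSum_append, ht.neg_one_pow]
    ring

lemma altWeight_rotate {l : List Bool} (hl : Even l.length) (n : ℕ) :
    altWeight (l.rotate n) = (-1) ^ n * altWeight l := by
  induction n with
  | zero => simp
  | succ n ih =>
    rw [← List.rotate_rotate, altWeight_rotate_one (by rwa [List.length_rotate]), ih, pow_succ]
    ring

namespace CyclicMove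

variable {l l' : List Bool}

lemma even_length_iff (h : CyclicMove l l') : Even l'.length ↔ Even l.length := by
  rcases h with ⟨p, s, x, rfl, rfl⟩ | ⟨n, rfl⟩
  · simp [Nat.even_add]
  · rw [List.length_rotate]

lemma natAbs_altWeight (h : CyclicMove l l') (hl : Even l.length) :
    (altWeight l').natAbs = (altWeight l).natAbs := by
  rcases h with ⟨p, s, x, rfl, rfl⟩ | ⟨n, rfl⟩
  · rw [altWeight_cancel]
  · simp [altWeight_rotate hl, Int.natAbs_mul]

lemma even_length_of_reflTransGen (h : ReflTransGen CyclicMove l l') (hl : Even l.length) :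
    Even l'.length := by
  induction h with
  | refl => exact hl
  | tail _ hmove ih => exact hmove.even_length_iff.mpr ih

lemma natAbs_altWeight_of_reflTransGen (h : ReflTransGen CyclicMove l l') (hl : Even l.length) :
    (altWeight l').natAbs = (altWeight l).natAbs := by
  induction h with
  | refl => rfl
  | tail hpath hmove ih =>
    rw [hmove.natAbs_altWeight (even_length_of_reflTransGen hpath hl), ih]

end CyclicMove

def altWord (a : Bool) (n : ℕ) : List Bool :=
  (List.replicate n [a, !a]).flatten

lemma altWord_succ (a : Bool) (n : ℕ) : altWord a (n + 1) = a :: (!a) :: altWord a n := by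
  simp [altWord, List.replicate_succ]

lemma altWord_true (n : ℕ) : altWord true n = abPow n := rfl

lemma altWeight_abPow (n : ℕ) : altWeight (abPow n) = n := by
  induction n with
  | zero => rfl
  | succ n ih =>
    simp only [altWeight, ← altWord_true, altWord_succ] at ih ⊢
    simp [ih, add_comm]

lemma altWord_append_singleton (a : Bool) (n : ℕ) :
    altWord a n ++ [a] = a :: altWord (!a) n := by
  induction n with
  | zero => rfl
  | succ n ih => simp [altWord_succ, ih]

lemma altWord_rotate_one (a : Bool) (n : ℕ) : (altWord a n).rotate 1 = altWord (!a) n := by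
  cases n with
  | zero => rfl
  | succ n => simp [altWord_succ, altWord_append_singleton]

lemma exists_altWord_of_isChain_ne :
    ∀ {l : List Bool}, l.IsChain (· ≠ ·) → Even l.length → ∃ a n, l = altWord a n
  | [], _, _ => ⟨true, 0, rfl⟩
  | [_], _, hl => by simp at hl
  | a :: b :: t, hchain, hl => by
    obtain ⟨hab, hbt⟩ := List.isChain_cons_cons.mp hchain
    obtain ⟨c, n, rfl⟩ := exists_altWord_of_isChain_ne hbt.tail (by simpa [Nat.even_add] using hl)
    refine ⟨a, n + 1, ?_⟩
    cases n <;> cases a <;> cases b <;> cases c <;> simp_all [altWord, List.replicate_succ]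

lemma exists_cancel_of_not_isChain_ne :
    ∀ {l : List Bool}, ¬ l.IsChain (· ≠ ·) → ∃ p s x, l = p ++ [x, x] ++ s
  | [], h | [_], h => absurd (by simp) h
  | a :: b :: t, h => by
    by_cases hab : a = b
    · exact ⟨[], t, a, by simp [hab]⟩
    · obtain ⟨p, s, x, hbt⟩ := exists_cancel_of_not_isChain_ne (l := b :: t) (by simp_all)
      exact ⟨a :: p, s, x, by simp [hbt]⟩

lemma reflTransGen_cyclicMove_altWord (a : Bool) (n : ℕ) :
    ReflTransGen CyclicMove (altWord a n) (abPow n) := by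
  cases a with
  | true => exact .refl
  | false => exact .single (Or.inr ⟨1, (altWord_rotate_one false n).symm⟩)

lemma exists_reflTransGen_cyclicMove_abPow (l : List Bool) (hl : Even l.length) :
    ∃ n, ReflTransGen CyclicMove l (abPow n) := by
  by_cases hchain : l.IsChain (· ≠ ·)
  · obtain ⟨a, n, rfl⟩ := exists_altWord_of_isChain_ne hchain hl
    exact ⟨n, reflTransGen_cyclicMove_altWord a n⟩
  · obtain ⟨p, s, x, rfl⟩ := exists_cancel_of_not_isChain_ne hchain
    have hcancel : CyclicMove (p ++ [x, x] ++ s) (p ++ s) := Or.inl ⟨p, s, x, rfl, rfl⟩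
    obtain ⟨n, hn⟩ :=
      exists_reflTransGen_cyclicMove_abPow (p ++ s) (hcancel.even_length_iff.mpr hl)
    exact ⟨n, .head hcancel hn⟩
termination_by l.length
decreasing_by subst_vars; simp only [List.length_append, List.length_cons]; omega

/-- Cyclic reduction of arrow words: every even-length word over {α, β} reduces,
by cyclic rotations and cancellation steps, to (αβ)ⁿ for exactly one n. -/
theorem cyclic_reduction_unique (l : List Bool) (hl : Even l.length) :
    ∃! n : ℕ, Relation.ReflTransGen CyclicMove l (abPow n) := by
  obtain ⟨n, hn⟩ := exists_reflTransGen_cyclicMove_abPow l hl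
  refine ⟨n, hn, fun m hm => ?_⟩
  have h := (CyclicMove.natAbs_altWeight_of_reflTransGen hm hl).trans
    (CyclicMove.natAbs_altWeight_of_reflTransGen hn hl).symm
  simpa [altWeight_abPow] using h
end
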